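/- Let Φ ∈ 𝒞_VP. Then for all r ≥ 0 and s ≥ 0 one has (r+s)·(Φ(r+s) − Φ(r) − Φ(s)) ≤ 2·(r·Φ(s) + s·Φ(r)). -/

import Mathlib

open Filter Topology

/-- Let `Φ ∈ 𝒞_VP`, i.e. `Φ ∈ C^∞([0,∞))` is convex with `Φ(0) = Φ'(0) = 0`,
`Φ'` concave and `Φ'(r) > 0` for `r > 0`. Then for all `r ≥ 0` and `s ≥ 0` one has
`(r+s)(Φ(r+s) − Φ(r) − Φ(s)) ≤ 2 (r Φ(s) + s Φ(r))`. -/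
theorem CVP_superadditivity_bound
    (Φ Φ' : ℝ → ℝ)
    (hsmooth : ContDiffOn ℝ (⊤ : ℕ∞) Φ (Set.Ici 0))
    (hconv : ConvexOn ℝ (Set.Ici 0) Φ)
    (hderiv : ∀ r ∈ Set.Ici (0:ℝ), HasDerivWithinAt Φ (Φ' r) (Set.Ici 0) r)
    (hconc : ConcaveOn ℝ (Set.Ici 0) Φ')
    (hΦ0 : Φ 0 = 0) (hΦ'0 : Φ' 0 = 0)
    (hΦ'pos : ∀ r : ℝ, 0 < r → 0 < Φ' r) :
    ∀ r s : ℝ, 0 ≤ r → 0 ≤ s →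
      (r + s) * (Φ (r + s) - Φ r - Φ s) ≤ 2 * (r * Φ s + s * Φ r) := by
  have hcont : ContinuousOn Φ (Set.Ici 0) := hsmooth.continuousOn
  -- subadditivity of Φ'
  have hsub : ∀ a b : ℝ, 0 ≤ a → 0 ≤ b → Φ' (a + b) ≤ Φ' a + Φ' b := by
    intro a b ha hb
    rcases eq_or_lt_of_le (by linarith : (0:ℝ) ≤ a + b) with h | h
    · have ha0 : a = 0 := by linarith
      have hb0 : b = 0 := by linarith
      simp [ha0, hb0, hΦ'0]
    · set c := a + b with hc
      have hcpos : 0 < c := h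
      have h1 : (a/c) • Φ' c + (b/c) • Φ' 0 ≤ Φ' ((a/c) • c + (b/c) • 0) :=
        hconc.2 (le_of_lt hcpos) (Set.mem_Ici.2 (le_refl 0)) (by positivity) (by positivity)
          (by field_simp; exact hc.symm)
      have h2 : (b/c) • Φ' c + (a/c) • Φ' 0 ≤ Φ' ((b/c) • c + (a/c) • 0) :=
        hconc.2 (le_of_lt hcpos) (Set.mem_Ici.2 (le_refl 0)) (by positivity) (by positivity)
          (by field_simp; ring)
      have e1 : (a/c) • c + (b/c) • (0:ℝ) = a := by simp only [smul_eq_mul]; field_simp; ring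
      have e2 : (b/c) • c + (a/c) • (0:ℝ) = b := by simp only [smul_eq_mul]; field_simp; ring
      rw [e1] at h1; rw [e2] at h2
      simp only [smul_eq_mul, hΦ'0, mul_zero, add_zero] at h1 h2
      have : (a/c) * Φ' c + (b/c) * Φ' c = Φ' c := by field_simp; ring
      linarith
  -- Φ'(t) ≥ (t/r) Φ'(r) on [0,r], in product form
  have hmid : ∀ t r : ℝ, 0 ≤ t → t ≤ r → t * Φ' r ≤ r * Φ' t := by
    intro t r ht htr
    rcases eq_or_lt_of_le (le_trans ht htr) with h | h
    · have : t = 0 := by linarith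
      simp [this, ← h]
    · have h1 : (t/r) • Φ' r + ((r-t)/r) • Φ' 0 ≤ Φ' ((t/r) • r + ((r-t)/r) • 0) :=
        hconc.2 (le_of_lt h) (Set.mem_Ici.2 (le_refl 0)) (by positivity)
          (div_nonneg (by linarith) (le_of_lt h)) (by field_simp; ring)
      have e1 : (t/r) • r + ((r-t)/r) • (0:ℝ) = t := by simp only [smul_eq_mul]; field_simp; ring
      rw [e1] at h1
      simp only [smul_eq_mul, hΦ'0, mul_zero, add_zero] at h1
      rw [div_mul_eq_mul_div, div_le_iff₀ h] at h1
      linarith [h1]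
  -- key step: Φ(r+s) - Φ r - Φ s ≤ s * Φ' r
  have hkey : ∀ r s : ℝ, 0 ≤ r → 0 ≤ s → Φ (r + s) - Φ r - Φ s ≤ s * Φ' r := by
    intro r s hr hs
    set g : ℝ → ℝ := fun t => Φ (r + t) - Φ t - t * Φ' r with hg
    have hanti : AntitoneOn g (Set.Ici 0) := by
      apply antitoneOn_of_hasDerivWithinAt_nonpos (f' := fun t => Φ' (r + t) - Φ' t - Φ' r)
        (convex_Ici 0)
      · apply ContinuousOn.sub
        apply ContinuousOn.sub
        · exact hcont.comp (continuous_const.add continuous_id).continuousOn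
            (fun t ht => by simp only [Set.mem_Ici] at *; exact add_nonneg hr ht)
        · exact hcont
        · exact (continuous_id.mul continuous_const).continuousOn
      · intro t ht
        rw [interior_Ici] at ht ⊢
        have ht' : (0:ℝ) < t := ht
        have h1 : HasDerivWithinAt (fun t => Φ (r + t)) (Φ' (r + t) * 1) (Set.Ioi 0) t := by
          exact HasDerivWithinAt.comp t
            (hderiv (r + t) (by simp; linarith))
            (((hasDerivAt_id t).const_add r).hasDerivWithinAt)
            (fun x hx => by simp only [Set.mem_Ioi, Set.mem_Ici] at *; linarith)
        rw [mul_one] at h1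
        have h2 : HasDerivWithinAt Φ (Φ' t) (Set.Ioi 0) t :=
          (hderiv t (le_of_lt ht')).mono Set.Ioi_subset_Ici_self
        have h3 : HasDerivWithinAt (fun t : ℝ => t * Φ' r) (Φ' r) (Set.Ioi 0) t := by
          simpa using ((hasDerivAt_id t).mul_const (Φ' r)).hasDerivWithinAt
        exact (h1.sub h2).sub h3
      · intro t ht
        rw [interior_Ici] at ht
        have := hsub r t hr (le_of_lt ht)
        linarith
    have := hanti (Set.self_mem_Ici) hs hs
    simp only [hg, add_zero, hΦ0, zero_mul, sub_zero] at this
    linarith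
  -- r * Φ' r ≤ 2 Φ r
  have hhalf : ∀ r : ℝ, 0 ≤ r → r * Φ' r ≤ 2 * Φ r := by
    intro r hr
    rcases eq_or_lt_of_le hr with h | h
    · simp [← h, hΦ0, hΦ'0]
    · set h' : ℝ → ℝ := fun t => 2 * r * Φ t - t ^ 2 * Φ' r with hh
      have hmono : MonotoneOn h' (Set.Icc 0 r) := by
        apply monotoneOn_of_hasDerivWithinAt_nonneg
          (f' := fun t => 2 * r * Φ' t - 2 * t * Φ' r) (convex_Icc 0 r)
        · exact (continuousOn_const.mul (hcont.mono Set.Icc_subset_Ici_self)).sub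
            ((continuous_pow 2).continuousOn.mul continuousOn_const)
        · intro t ht
          rw [interior_Icc] at ht ⊢
          have h1 : HasDerivWithinAt (fun t => 2 * r * Φ t) (2 * r * Φ' t) (Set.Ioo 0 r) t :=
            ((hderiv t (le_of_lt ht.1)).mono (fun x hx => le_of_lt hx.1)).const_mul (2 * r)
          have h2 : HasDerivWithinAt (fun t : ℝ => t ^ 2 * Φ' r) (2 * t * Φ' r) (Set.Ioo 0 r) t := by
            have := ((hasDerivAt_pow 2 t).mul_const (Φ' r)).hasDerivWithinAt (s := Set.Ioo 0 r)
            simpa [mul_comm] using this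
          exact h1.sub h2
        · intro t ht
          rw [interior_Icc] at ht
          have := hmid t r (le_of_lt ht.1) (le_of_lt ht.2)
          nlinarith
      have := hmono (Set.left_mem_Icc.2 hr) (Set.right_mem_Icc.2 hr) hr
      simp only [hh, hΦ0, mul_zero, ne_eq] at this
      nlinarith
  intro r s hr hs
  have k1 := hkey r s hr hs
  have k2 := hkey s r hs hr
  have k3 := hhalf r hr
  have k4 := hhalf s hs
  rw [add_comm s r] at k2
  nlinarith [mul_le_mul_of_nonneg_left k1 hr, mul_le_mul_of_nonneg_left k2 hs,
    mul_le_mul_of_nonneg_left k3 hs, mul_le_mul_of_nonneg_left k4 hr]
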